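/- arXiv:1102.4981 — 2 statements merged into one kernel-verified Lean document; each statement's English description precedes it below -/
import Mathlib

section
/- For any nonempty subset S of internal nodes of a complete binary tree T with the root excluded (S ⊆ I(V_T) \ {r(T)}), if the subgraph of T induced by S has m connected components, then the node boundary of S in T has cardinality at least |S| + m + 1. -/
/-- Vertices of the complete binary tree of height `h`: lists of booleans of
length at most `h`, recorded from the vertex up to the root (so the root is `[]`,
and a child of `v` is `b :: v` for a bit `b`). The depth of a vertex is the
length of its list. -/
def CBTVert (h : ℕ) : Type := {l : List Bool // l.length ≤ h}

/-- The complete binary tree of height `h` as a simple graph: `u` and `v` are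
adjacent iff one is a child of the other. -/
def cbt (h : ℕ) : SimpleGraph (CBTVert h) where
  Adj u v := (∃ b, u.1 = b :: v.1) ∨ (∃ b, v.1 = b :: u.1)
  symm := by constructor; intro u v hv; tauto
  loopless := by
    constructor
    rintro u (⟨b, hb⟩ | ⟨b, hb⟩) <;>
      simpa using congrArg List.length hb

/-- The node boundary of a set `S`: vertices outside `S` adjacent to some vertex of `S`. -/
def nbd {V : Type*} (G : SimpleGraph V) (S : Set V) : Set V :=
  {v | v ∉ S ∧ ∃ u ∈ S, G.Adj u v}

/-- Leaves are the vertices of maximal depth (the tree is complete). -/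
def isLeaf {h : ℕ} (v : CBTVert h) : Prop := v.1.length = h

/-- Internal nodes are the non-leaf vertices. -/
def isInternal {h : ℕ} (v : CBTVert h) : Prop := v.1.length < h

/-- The root of the complete binary tree. -/
def root (h : ℕ) : CBTVert h := ⟨[], by simp⟩

/-- `desc x v` means `v` belongs to the subtree rooted at `x`
(`x`'s list is a suffix of `v`'s list). -/
def desc {h : ℕ} (x v : CBTVert h) : Prop := x.1 <:+ v.1

/-- The subtree rooted at `x` is `S`-occupied if all its leaves belong to `S`. -/
def occupied {h : ℕ} (S : Set (CBTVert h)) (x : CBTVert h) : Prop :=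
  ∀ v : CBTVert h, desc x v → isLeaf v → v ∈ S

/-- The subtree rooted at `x` is a maximal `S`-occupied subtree. -/
def maxOccupied {h : ℕ} (S : Set (CBTVert h)) (x : CBTVert h) : Prop :=
  occupied S x ∧ ∀ y, desc y x → occupied S y → y = x

/-!
Every vertex of `S` is internal, so `S` has exactly `2 |S|` children. The vertices of `S` whose
parent lies outside `S` are the topmost vertices of the components of `Ind(S)`, one per component,
so `|S| - m` of the children lie in `S` and `|S| + m` lie in `∂S`. The parent of a shallowest
vertex of `S` is one more boundary vertex, and it is not a child of any vertex of `S`.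
-/

namespace CBTVert

variable {h : ℕ}

instance : Finite (CBTVert h) := (List.finite_length_le Bool h).to_subtype

/-- The root is its own parent. -/
def parent (v : CBTVert h) : CBTVert h := ⟨v.1.tail, by simpa using (Nat.sub_le _ 1).trans v.2⟩

lemma val_ne_nil_of_ne_root {v : CBTVert h} (hv : v ≠ root h) : v.1 ≠ [] :=
  fun hnil => hv (Subtype.ext hnil)

lemma length_parent_lt {v : CBTVert h} (hv : v ≠ root h) :
    (parent v).1.length < v.1.length := by
  have := List.length_pos_iff.mpr (val_ne_nil_of_ne_root hv)
  simp only [parent, List.length_tail]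
  omega

lemma cbt_adj_parent {v : CBTVert h} (hv : v ≠ root h) : (cbt h).Adj v (parent v) :=
  Or.inl ⟨v.1.head (val_ne_nil_of_ne_root hv), (List.cons_head_tail _).symm⟩

def tops (S : Set (CBTVert h)) : Set (CBTVert h) := {v | v ∈ S ∧ parent v ∉ S}

def children (S : Set (CBTVert h)) : Set (CBTVert h) := {w | w ≠ root h ∧ parent w ∈ S}

variable {S : Set (CBTVert h)}

/-- Leaving the subtree of `v` would pass through `parent v`. -/
lemma desc_of_walk_induce {v : CBTVert h} (hv : parent v ∉ S) {x u : S}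
    (p : ((cbt h).induce S).Walk x u) (hx : desc v x.1) : desc v u.1 := by
  induction p with
  | nil => exact hx
  | @cons a c u hac _ ih =>
    refine ih ?_
    rcases hac with ⟨b, hb⟩ | ⟨b, hb⟩
    · have hb : a.1.1 = b :: c.1.1 := hb
      rcases List.suffix_cons_iff.mp (hb ▸ hx : v.1 <:+ b :: c.1.1) with hva | hvc
      · have hpv : parent v = c.1 := Subtype.ext (by simp [parent, hva])
        exact absurd (hpv ▸ c.2) hv
      · exact hvc
    · have hb : c.1.1 = b :: a.1.1 := hb
      exact hx.trans (hb ▸ List.suffix_cons b _)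

lemma card_connectedComponent_eq_ncard_tops (hroot : root h ∉ S) :
    Nat.card ((cbt h).induce S).ConnectedComponent = (tops S).ncard := by
  rw [← Nat.card_coe_set_eq]
  symm
  refine Nat.card_eq_of_bijective
    (fun t : tops S => ((cbt h).induce S).connectedComponentMk ⟨t.1, t.2.1⟩) ⟨?_, ?_⟩
  · rintro ⟨v, hv⟩ ⟨w, hw⟩ hvw
    obtain ⟨p⟩ := SimpleGraph.ConnectedComponent.exact hvw
    have hvw : desc v w := desc_of_walk_induce hv.2 p List.suffix_rfl
    have hwv : desc w v := desc_of_walk_induce hw.2 p.reverse List.suffix_rfl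
    exact Subtype.ext (Subtype.ext (hvw.eq_of_length_le hwv.length_le))
  · intro c
    obtain ⟨t, ht, htmin⟩ := Set.exists_min_image
      {w : S | ((cbt h).induce S).connectedComponentMk w = c}
      (fun w => w.1.1.length) (Set.toFinite _) c.nonempty_supp
    refine ⟨⟨t.1, t.2, fun hpt => ?_⟩, ht⟩
    have htroot : t.1 ≠ root h := fun heq => hroot (heq ▸ t.2)
    have hadj : ((cbt h).induce S).Adj ⟨parent t.1, hpt⟩ t := (cbt_adj_parent htroot).symm
    have hpc : ((cbt h).induce S).connectedComponentMk ⟨parent t.1, hpt⟩ = c :=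
      ht ▸ SimpleGraph.ConnectedComponent.sound hadj.reachable
    exact absurd (htmin _ hpc) (not_le.mpr (length_parent_lt htroot))

def childrenEquiv (hint : ∀ v ∈ S, isInternal v) : children S ≃ S × Bool where
  toFun w := (⟨parent w.1, w.2.2⟩, w.1.1.head (val_ne_nil_of_ne_root w.2.1))
  invFun vb := ⟨⟨vb.2 :: vb.1.1.1, hint _ vb.1.2⟩,
    fun heq => List.cons_ne_nil _ _ (congrArg Subtype.val heq), vb.1.2⟩
  left_inv _ := Subtype.ext (Subtype.ext (List.cons_head_tail _))
  right_inv _ := rfl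

lemma ncard_children (hint : ∀ v ∈ S, isInternal v) : (children S).ncard = 2 * S.ncard := by
  rw [← Nat.card_coe_set_eq, Nat.card_congr (childrenEquiv hint), Nat.card_prod,
    Nat.card_coe_set_eq, Nat.card_eq_fintype_card, Fintype.card_bool, mul_comm]

lemma ncard_children_sdiff (hint : ∀ v ∈ S, isInternal v) (hroot : root h ∉ S) :
    (children S \ S).ncard = S.ncard + (tops S).ncard := by
  have hinter : children S ∩ S = S \ tops S := by
    ext w
    simp only [children, tops, Set.mem_inter_iff, Set.mem_sdiff, Set.mem_ofPred_eq]
    exact ⟨fun ⟨⟨_, hp⟩, hw⟩ => ⟨hw, fun ⟨_, hp'⟩ => hp' hp⟩,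
      fun ⟨hw, hnt⟩ => ⟨⟨fun heq => hroot (heq ▸ hw), not_not.mp fun hp => hnt ⟨hw, hp⟩⟩, hw⟩⟩
  have hsplit := Set.ncard_sdiff_add_ncard_of_subset (s := tops S) (t := S) (fun _ hv => hv.1)
  have hchildren := Set.ncard_inter_add_ncard_sdiff_eq_ncard (children S) S
  rw [hinter, ncard_children hint] at hchildren
  omega

lemma children_sdiff_subset_nbd : children S \ S ⊆ nbd (cbt h) S :=
  fun _ ⟨⟨hw, hp⟩, hwS⟩ => ⟨hwS, _, hp, (cbt_adj_parent hw).symm⟩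

/-- The parent of a vertex of minimal depth in `S` is a boundary vertex that is not a child of
any vertex of `S`. -/
lemma exists_mem_nbd_notMem_children (hne : S.Nonempty) (hroot : root h ∉ S) :
    ∃ p ∈ nbd (cbt h) S, p ∉ children S := by
  obtain ⟨t, htS, htmin⟩ := Set.exists_min_image S (fun v => v.1.length) (Set.toFinite _) hne
  have htroot : t ≠ root h := fun heq => hroot (heq ▸ htS)
  have hlt := length_parent_lt htroot
  refine ⟨parent t, ⟨fun hpS => ?_, t, htS, cbt_adj_parent htroot⟩, fun ⟨hproot, hppS⟩ => ?_⟩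
  · exact absurd (htmin _ hpS) (not_le.mpr hlt)
  · exact absurd (htmin _ hppS) (not_le.mpr ((length_parent_lt hproot).trans hlt))

end CBTVert

/-- Lemma 2: for a nonempty set S of internal nodes excluding the root whose
induced subgraph has m connected components, the node boundary has size at
least |S| + m + 1. -/
theorem stmt1 (h m : ℕ) (S : Set (CBTVert h)) (hne : S.Nonempty)
    (hint : ∀ v ∈ S, isInternal v) (hroot : root h ∉ S)
    (hm : Nat.card ((cbt h).induce S).ConnectedComponent = m) :
    (nbd (cbt h) S).ncard ≥ S.ncard + m + 1 := by
  obtain ⟨p, hp, hpC⟩ := CBTVert.exists_mem_nbd_notMem_children hne hroot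
  have hsub : insert p (CBTVert.children S \ S) ⊆ nbd (cbt h) S :=
    Set.insert_subset hp CBTVert.children_sdiff_subset_nbd
  have hcard : (insert p (CBTVert.children S \ S)).ncard = S.ncard + m + 1 := by
    rw [Set.ncard_insert_of_notMem (fun hpD => hpC hpD.1) (Set.toFinite _),
      CBTVert.ncard_children_sdiff hint hroot,
      ← CBTVert.card_connectedComponent_eq_ncard_tops hroot, hm]
  exact hcard ▸ Set.ncard_le_ncard hsub (Set.toFinite _)
end

section
/- The sum ∑_{s=1}^{n/2} (s/16) · 2^{0.841 s} · (s/n)^{0.854 s} tends to 0 as n → ∞. -/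
/-!
Since `2s ≤ n`, the `s`-th term is at most `(s/16) · 2^{(0.841 - 0.854) s}`, and `2^{-0.013} < 1`
makes this dominating sequence summable. Each fixed term tends to `0` as `n → ∞`, so Tannery's
theorem (dominated convergence for series) gives the limit `0`.
-/

open Filter Topology

theorem tendsto_finsetSum_zero_of_dominated {α β G : Type*} {𝓕 : Filter α}
    [NormedAddCommGroup G] [CompleteSpace G] {f : α → β → G} {bound : β → ℝ}
    (S : α → Finset β) (h_sum : Summable bound) (h_bound : ∀ n, ∀ k ∈ S n, ‖f n k‖ ≤ bound k)
    (h_lim : ∀ k, Tendsto (f · k) 𝓕 (𝓝 0)) :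
    Tendsto (fun n ↦ ∑ k ∈ S n, f n k) 𝓕 (𝓝 0) := by
  have h := tendsto_tsum_of_dominated_convergence (g := fun _ ↦ (0 : G)) h_sum.abs
    (f := fun n ↦ (S n : Set β).indicator (f n))
    (fun k ↦ squeeze_zero_norm (fun _ ↦ norm_indicator_le_norm_self _ _)
      (tendsto_zero_iff_norm_tendsto_zero.1 (h_lim k)))
    (Eventually.of_forall fun n k ↦ ?_)
  · rw [tsum_zero] at h
    exact h.congr fun n ↦ (sum_eq_tsum_indicator (f n) (S n)).symm
  · by_cases hk : k ∈ S n
    · rw [Set.indicator_of_mem (Finset.mem_coe.2 hk)]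
      exact (h_bound n k hk).trans (le_abs_self _)
    · rw [Set.indicator_of_notMem (Finset.mem_coe.not.2 hk), norm_zero]
      exact abs_nonneg _

namespace Real

theorem mul_two_rpow_mul_div_rpow_le {a b : ℝ} (hb : 0 ≤ b) {s n : ℕ} (hsn : 2 * s ≤ n) :
    (s : ℝ) * 2 ^ (a * s) * ((s : ℝ) / n) ^ (b * s) ≤ s * (2 ^ (a - b)) ^ s := by
  have h2s : 2 * (s : ℝ) ≤ n := by exact_mod_cast hsn
  have hs : (s : ℝ) / n ≤ 2⁻¹ := div_le_of_le_mul₀ (Nat.cast_nonneg _) (by norm_num) (by linarith)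
  calc (s : ℝ) * 2 ^ (a * s) * ((s : ℝ) / n) ^ (b * s)
      ≤ s * 2 ^ (a * s) * 2⁻¹ ^ (b * s) := by gcongr
    _ = s * 2 ^ ((a - b) * s) := by
      rw [inv_rpow zero_le_two, ← rpow_neg zero_le_two, mul_assoc, ← rpow_add zero_lt_two]
      ring_nf
    _ = s * (2 ^ (a - b)) ^ s := by rw [rpow_mul_natCast zero_le_two]

theorem tendsto_mul_two_rpow_mul_div_rpow_zero {a b : ℝ} (hb : 0 < b) (s : ℕ) :
    Tendsto (fun n : ℕ ↦ (s : ℝ) * 2 ^ (a * s) * ((s : ℝ) / n) ^ (b * s)) atTop (𝓝 0) := by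
  rcases Nat.eq_zero_or_pos s with rfl | hs
  · simp
  have hbs : 0 < b * s := mul_pos hb (Nat.cast_pos.2 hs)
  have h := ((continuousAt_rpow_const 0 (b * s) (Or.inr hbs.le)).tendsto.comp
    (tendsto_const_div_atTop_nhds_zero_nat (s : ℝ))).const_mul ((s : ℝ) * 2 ^ (a * s))
  rwa [zero_rpow hbs.ne', mul_zero] at h

theorem tendsto_sum_Icc_half_mul_two_rpow_mul_div_rpow_zero {a b : ℝ} (hb : 0 < b) (hab : a < b) :
    Tendsto (fun n : ℕ ↦ ∑ s ∈ Finset.Icc 1 (n / 2),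
      (s : ℝ) * 2 ^ (a * s) * ((s : ℝ) / n) ^ (b * s)) atTop (𝓝 0) := by
  have hc : ‖(2 : ℝ) ^ (a - b)‖ < 1 := by
    rw [norm_of_nonneg (by positivity)]
    exact rpow_lt_one_of_one_lt_of_neg one_lt_two (sub_neg.2 hab)
  refine tendsto_finsetSum_zero_of_dominated _
    (by simpa only [pow_one] using summable_pow_mul_geometric_of_norm_lt_one 1 hc)
    (fun n s hs ↦ ?_) (tendsto_mul_two_rpow_mul_div_rpow_zero hb)
  rw [norm_of_nonneg (by positivity)]
  exact mul_two_rpow_mul_div_rpow_le hb.le (by have := (Finset.mem_Icc.1 hs).2; omega)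

end Real

/-- The final union-bound estimate: ∑_{s=1}^{n/2} (s/16) 2^{0.841 s} (s/n)^{0.854 s}
tends to 0 as n → ∞. -/
theorem stmt16 :
    Filter.Tendsto
      (fun n : ℕ => ∑ s ∈ Finset.Icc 1 (n / 2),
        ((s : ℝ) / 16) * (2 : ℝ) ^ ((0.841 : ℝ) * s) *
          ((s : ℝ) / n) ^ ((0.854 : ℝ) * s))
      Filter.atTop (nhds 0) := by
  have h := (Real.tendsto_sum_Icc_half_mul_two_rpow_mul_div_rpow_zero
    (a := 0.841) (b := 0.854) (by norm_num) (by norm_num)).const_mul (1 / 16)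
  rw [mul_zero] at h
  refine h.congr fun n ↦ ?_
  rw [Finset.mul_sum]
  exact Finset.sum_congr rfl fun s _ ↦ by ring
end
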